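/- arXiv:1110.6851 — 4 statements merged into one kernel-verified Lean document; each statement's English description precedes it below -/
import Mathlib

section
/- If every finite stage of a sequential inductive system of ordered abelian groups has Riesz interpolation, then the inductive limit also has Riesz interpolation. -/
/-!
Every interpolation problem in the limit involves four elements and four positivity witnesses,
all of which lift to one finite stage. There the lifted differences agree with the lifted
positive witnesses only up to elements that vanish in the limit; by the kernel condition these
die after finitely many further connecting maps, so at a later stage the four differences are
positive on the nose. Interpolating at that stage and mapping to the limit solves the problem.
-/

/-- The composite connecting map from stage `i` to stage `i + k` of a sequential
inductive system of abelian groups. -/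
def iterD (G : ℕ → Type*) [∀ i, AddCommGroup (G i)] (φ : ∀ i, G i →+ G (i + 1)) :
    ∀ i k, G i →+ G (i + k)
  | _, 0 => AddMonoidHom.id _
  | i, k + 1 => (φ (i + k)).comp (iterD G φ i k)

open Filter

section InductiveSystem

variable {G : ℕ → Type*} [∀ i, AddCommGroup (G i)] {φ : ∀ i, G i →+ G (i + 1)}
  {P : ∀ i, Set (G i)} {H : Type*} [AddCommGroup H] {f : ∀ i, G i →+ H}

theorem iterD_succ_apply (i k : ℕ) (x : G i) :
    iterD G φ i (k + 1) x = φ (i + k) (iterD G φ i k x) :=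
  rfl

theorem iterD_mem (hφ : ∀ i, ∀ x ∈ P i, φ i x ∈ P (i + 1)) {i : ℕ} {x : G i} (hx : x ∈ P i)
    (k : ℕ) : iterD G φ i k x ∈ P (i + k) := by
  induction k with
  | zero => exact hx
  | succ k ih => exact hφ _ _ ih

theorem map_iterD (hcompat : ∀ i (x : G i), f (i + 1) (φ i x) = f i x) (i k : ℕ) (x : G i) :
    f (i + k) (iterD G φ i k x) = f i x := by
  induction k with
  | zero => rfl
  | succ k ih => exact (hcompat _ _).trans ih

theorem iterD_eq_zero_of_le {i k n : ℕ} {x : G i} (hk : iterD G φ i k x = 0) (hkn : k ≤ n) :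
    iterD G φ i n x = 0 := by
  induction n, hkn using Nat.le_induction with
  | base => exact hk
  | succ n _ ih => rw [iterD_succ_apply, ih, map_zero]

theorem eventually_iterD_eq_zero (hexact : ∀ i (x : G i), f i x = 0 → ∃ k, iterD G φ i k x = 0)
    {i : ℕ} {x : G i} (hx : f i x = 0) : ∀ᶠ k in atTop, iterD G φ i k x = 0 := by
  obtain ⟨k, hk⟩ := hexact i x hx
  exact eventually_atTop.2 ⟨k, fun _ => iterD_eq_zero_of_le hk⟩

theorem eventually_iterD_mem (hφ : ∀ i, ∀ x ∈ P i, φ i x ∈ P (i + 1))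
    (hexact : ∀ i (x : G i), f i x = 0 → ∃ k, iterD G φ i k x = 0)
    {i : ℕ} {x q : G i} (hq : q ∈ P i) (hxq : f i x = f i q) :
    ∀ᶠ k in atTop, iterD G φ i k x ∈ P (i + k) := by
  have hdiff : f i (x - q) = 0 := by rw [map_sub, hxq, sub_self]
  filter_upwards [eventually_iterD_eq_zero hexact hdiff] with k hk
  rw [map_sub, sub_eq_zero] at hk
  exact hk ▸ iterD_mem hφ hq k

theorem eventually_exists_lift (hcompat : ∀ i (x : G i), f (i + 1) (φ i x) = f i x)
    (hsurj : ∀ v : H, ∃ i, ∃ x : G i, f i x = v) (v : H) :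
    ∀ᶠ N in atTop, ∃ y : G N, f N y = v := by
  obtain ⟨i, x, rfl⟩ := hsurj v
  refine eventually_atTop.2 ⟨i, fun N hN => ?_⟩
  obtain ⟨d, rfl⟩ := Nat.exists_eq_add_of_le hN
  exact ⟨iterD G φ i d x, map_iterD hcompat i d x⟩

theorem eventually_exists_mem_lift (hφ : ∀ i, ∀ x ∈ P i, φ i x ∈ P (i + 1))
    (hcompat : ∀ i (x : G i), f (i + 1) (φ i x) = f i x) {v : H} (hv : v ∈ ⋃ i, f i '' P i) :
    ∀ᶠ N in atTop, ∃ y ∈ P N, f N y = v := by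
  obtain ⟨i, x, hx, rfl⟩ := Set.mem_iUnion.1 hv
  refine eventually_atTop.2 ⟨i, fun N hN => ?_⟩
  obtain ⟨d, rfl⟩ := Nat.exists_eq_add_of_le hN
  exact ⟨iterD G φ i d x, iterD_mem hφ hx d, map_iterD hcompat i d x⟩

end InductiveSystem

theorem stmt4_general (G : ℕ → Type*) [∀ i, AddCommGroup (G i)] (P : ∀ i, Set (G i))
    (φ : ∀ i, G i →+ G (i + 1))
    (hφ : ∀ i, ∀ x ∈ P i, φ i x ∈ P (i + 1))
    (hinterp : ∀ i, ∀ a₁ a₂ c₁ c₂ : G i,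
      c₁ - a₁ ∈ P i → c₁ - a₂ ∈ P i → c₂ - a₁ ∈ P i → c₂ - a₂ ∈ P i →
      ∃ b : G i, b - a₁ ∈ P i ∧ b - a₂ ∈ P i ∧ c₁ - b ∈ P i ∧ c₂ - b ∈ P i)
    (H : Type*) [AddCommGroup H] (f : ∀ i, G i →+ H)
    (hcompat : ∀ i (x : G i), f (i + 1) (φ i x) = f i x)
    (hsurj : ∀ v : H, ∃ i, ∃ x : G i, f i x = v)
    (hexact : ∀ i (x : G i), f i x = 0 → ∃ k, iterD G φ i k x = 0)
    (Q : Set H) (hQ : Q = ⋃ i, f i '' P i) :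
    ∀ a₁ a₂ c₁ c₂ : H,
      c₁ - a₁ ∈ Q → c₁ - a₂ ∈ Q → c₂ - a₁ ∈ Q → c₂ - a₂ ∈ Q →
      ∃ b : H, b - a₁ ∈ Q ∧ b - a₂ ∈ Q ∧ c₁ - b ∈ Q ∧ c₂ - b ∈ Q := by
  intro a₁ a₂ c₁ c₂ h₁₁ h₁₂ h₂₁ h₂₂
  subst hQ
  have lift := eventually_exists_lift hcompat hsurj
  have liftPos := fun {v : H} (hv : v ∈ ⋃ i, f i '' P i) => eventually_exists_mem_lift hφ hcompat hv
  obtain ⟨N, ⟨x₁, rfl⟩, ⟨x₂, rfl⟩, ⟨z₁, rfl⟩, ⟨z₂, rfl⟩, ⟨p₁₁, hp₁₁, e₁₁⟩, ⟨p₁₂, hp₁₂, e₁₂⟩,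
      ⟨p₂₁, hp₂₁, e₂₁⟩, ⟨p₂₂, hp₂₂, e₂₂⟩⟩ :=
    ((lift a₁).and <| (lift a₂).and <| (lift c₁).and <| (lift c₂).and <| (liftPos h₁₁).and <|
      (liftPos h₁₂).and <| (liftPos h₂₁).and (liftPos h₂₂)).exists
  have eventuallyPos : ∀ {x z p : G N}, p ∈ P N → f N p = f N z - f N x →
      ∀ᶠ k in atTop, iterD G φ N k (z - x) ∈ P (N + k) := fun hp e =>
    eventually_iterD_mem hφ hexact hp (by rw [map_sub, e])
  obtain ⟨k, m₁₁, m₁₂, m₂₁, m₂₂⟩ := ((eventuallyPos hp₁₁ e₁₁).and <| (eventuallyPos hp₁₂ e₁₂).and <|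
    (eventuallyPos hp₂₁ e₂₁).and (eventuallyPos hp₂₂ e₂₂)).exists
  simp only [map_sub] at m₁₁ m₁₂ m₂₁ m₂₂
  obtain ⟨b, hb₁, hb₂, hb₃, hb₄⟩ := hinterp (N + k) _ _ _ _ m₁₁ m₁₂ m₂₁ m₂₂
  have descend : ∀ {u : G (N + k)}, u ∈ P (N + k) → f (N + k) u ∈ ⋃ i, f i '' P i :=
    fun hu => Set.mem_iUnion_of_mem _ ⟨_, hu, rfl⟩
  refine ⟨f (N + k) b, ?_, ?_, ?_, ?_⟩
  · simpa only [map_sub, map_iterD hcompat] using descend hb₁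
  · simpa only [map_sub, map_iterD hcompat] using descend hb₂
  · simpa only [map_sub, map_iterD hcompat] using descend hb₃
  · simpa only [map_sub, map_iterD hcompat] using descend hb₄

/-- If every finite stage of a sequential inductive system of ordered abelian groups has
Riesz interpolation, then the inductive limit (a group `H` with compatible canonical maps
`f i`, every element eventually in the image, the usual direct-limit kernel condition, and
positive cone `Q = ⋃ i, f i '' P i`) also has Riesz interpolation. -/
theorem stmt4 (G : ℕ → Type*) [∀ i, AddCommGroup (G i)] (P : ∀ i, Set (G i))
    (hP0 : ∀ i, P i ∩ (-(P i)) = {0})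
    (hPadd : ∀ i, ∀ x ∈ P i, ∀ y ∈ P i, x + y ∈ P i)
    (φ : ∀ i, G i →+ G (i + 1))
    (hφ : ∀ i, ∀ x ∈ P i, φ i x ∈ P (i + 1))
    (hinterp : ∀ i, ∀ a₁ a₂ c₁ c₂ : G i,
      c₁ - a₁ ∈ P i → c₁ - a₂ ∈ P i → c₂ - a₁ ∈ P i → c₂ - a₂ ∈ P i →
      ∃ b : G i, b - a₁ ∈ P i ∧ b - a₂ ∈ P i ∧ c₁ - b ∈ P i ∧ c₂ - b ∈ P i)
    (H : Type*) [AddCommGroup H] (f : ∀ i, G i →+ H)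
    (hcompat : ∀ i (x : G i), f (i + 1) (φ i x) = f i x)
    (hsurj : ∀ v : H, ∃ i, ∃ x : G i, f i x = v)
    (hexact : ∀ i (x : G i), f i x = 0 → ∃ k, iterD G φ i k x = 0)
    (Q : Set H) (hQ : Q = ⋃ i, f i '' P i) :
    ∀ a₁ a₂ c₁ c₂ : H,
      c₁ - a₁ ∈ Q → c₁ - a₂ ∈ Q → c₂ - a₁ ∈ Q → c₂ - a₂ ∈ Q →
      ∃ b : H, b - a₁ ∈ Q ∧ b - a₂ ∈ Q ∧ c₁ - b ∈ Q ∧ c₂ - b ∈ Q :=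
  stmt4_general G P φ hφ hinterp H f hcompat hsurj hexact Q hQ
end

section
/- Let n ∈ ℕ, and let P: Fin n → Set (Fin n) be such that for all i, j: j ∉ P i implies P i ⊆ P j. For R > 0 in a subfield F of ℝ, define the linear map β^R: Fⁿ → Fⁿ by β^R_i(y) = y_i - R·∑_{j ∉ P i, P j ≠ P i} y_j. Then β^R is invertible. -/
/-!
Ordered by the sets `P i`, the map `β^R` is unitriangular: every `j` in the sum for `i` has
`P i ⊂ P j`, so a vector in its kernel vanishes at each `i` once it vanishes at all indices with
strictly larger `P`, and well-founded induction downwards gives injectivity. An injective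
endomorphism of a finite-dimensional space is bijective.
-/

open Classical

section SubMulSum

variable {ι α K : Type*} [Preorder α] [WellFoundedGT α]

def subMulSumLinearMap [CommRing K] (c : K) (S : ι → Finset ι) : (ι → K) →ₗ[K] (ι → K) where
  toFun y i := y i - c * ∑ j ∈ S i, y j
  map_add' x y := by
    funext i
    simp only [Pi.add_apply, Finset.sum_add_distrib]
    ring
  map_smul' a y := by
    funext i
    simp only [Pi.smul_apply, smul_eq_mul, RingHom.id_apply, ← Finset.mul_sum]
    ring

theorem eq_zero_of_sub_mul_sum_eq_zero [Ring K] (key : ι → α) (S : ι → Finset ι)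
    (hS : ∀ i, ∀ j ∈ S i, key i < key j) (c : K) (y : ι → K)
    (hy : ∀ i, y i - c * ∑ j ∈ S i, y j = 0) : y = 0 := by
  funext i
  induction i using (InvImage.wf key wellFounded_gt).induction with
  | _ i ih =>
    have hsum : ∑ j ∈ S i, y j = 0 := Finset.sum_eq_zero fun j hj => ih j (hS i j hj)
    simpa [hsum] using hy i

theorem bijective_sub_mul_sum [Fintype ι] [Field K] (key : ι → α) (S : ι → Finset ι)
    (hS : ∀ i, ∀ j ∈ S i, key i < key j) (c : K) :
    Function.Bijective fun (y : ι → K) i => y i - c * ∑ j ∈ S i, y j := by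
  have hinj : Function.Injective (subMulSumLinearMap c S) := by
    rw [← LinearMap.ker_eq_bot, LinearMap.ker_eq_bot']
    exact fun y hy => eq_zero_of_sub_mul_sum_eq_zero key S hS c y (congrFun hy)
  exact ⟨hinj, LinearMap.injective_iff_surjective.mp hinj⟩

end SubMulSum

theorem stmt7_general (F : Subfield ℝ) (n : ℕ) (P : Fin n → Set (Fin n))
    (hP : ∀ i j, j ∉ P i → P i ⊆ P j) (R : F) :
    Function.Bijective (fun (y : Fin n → F) (i : Fin n) =>
      y i - R * ∑ j ∈ Finset.univ.filter (fun j => j ∉ P i ∧ P j ≠ P i), y j) := by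
  refine bijective_sub_mul_sum P _ (fun i j hj => ?_) R
  obtain ⟨hji, hne⟩ := (Finset.mem_filter.mp hj).2
  exact (hP i j hji).ssubset_of_ne hne.symm

/-- Let `P : Fin n → Set (Fin n)` satisfy: `j ∉ P i` implies `P i ⊆ P j`. For `R > 0`
in a subfield `F` of `ℝ`, the linear map `β^R : Fⁿ → Fⁿ` given by
`β^R_i(y) = y_i - R ∑_{j ∉ P i, P j ≠ P i} y_j` is invertible. -/
theorem stmt7 (F : Subfield ℝ) (n : ℕ) (P : Fin n → Set (Fin n))
    (hP : ∀ i j, j ∉ P i → P i ⊆ P j) (R : F) (hR : 0 < R) :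
    Function.Bijective (fun (y : Fin n → F) (i : Fin n) =>
      y i - R * ∑ j ∈ Finset.univ.filter (fun j => j ∉ P i ∧ P j ≠ P i), y j) :=
  stmt7_general F n P hP R
end

section
/- Let S be a sublattice of the power set of {1,...,n} containing ∅ and {1,...,n}, and define U⁺ = ⋃_{S ∈ S} {x ∈ Fⁿ : x_i > 0 for i ∈ S and x_i = 0 for i ∉ S}. Then (Fⁿ, U⁺ ∪ {0}) is an ordered vector space: U⁺ is closed under addition and positive scalar multiplication, and U⁺ ∩ (-U⁺) = ∅ or {0} appropriately. -/
section PositiveOn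

variable {ι K : Type*}

/-- The vectors of the paper's `F_{>0}^S · 0^{S^c}`. -/
def positiveOn [Zero K] [LT K] (S : Set ι) : Set (ι → K) :=
  {x | (∀ i ∈ S, 0 < x i) ∧ ∀ i ∉ S, x i = 0}

theorem nonneg_of_mem_positiveOn [Zero K] [Preorder K] {S : Set ι} {x : ι → K}
    (hx : x ∈ positiveOn S) : 0 ≤ x := fun i => by
  by_cases hi : i ∈ S
  · exact (hx.1 i hi).le
  · exact (hx.2 i hi).ge

theorem add_mem_positiveOn_union [AddCommMonoid K] [PartialOrder K]
    [IsOrderedCancelAddMonoid K] {S T : Set ι} {x y : ι → K}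
    (hx : x ∈ positiveOn S) (hy : y ∈ positiveOn T) : x + y ∈ positiveOn (S ∪ T) := by
  refine ⟨fun i hi => ?_, fun i hi => ?_⟩
  · rcases hi with hiS | hiT
    · exact add_pos_of_pos_of_nonneg (hx.1 i hiS) (nonneg_of_mem_positiveOn hy i)
    · exact add_pos_of_nonneg_of_pos (nonneg_of_mem_positiveOn hx i) (hy.1 i hiT)
  · rw [Set.mem_union, not_or] at hi
    simp only [Pi.add_apply, hx.2 i hi.1, hy.2 i hi.2, add_zero]

theorem smul_mem_positiveOn [MulZeroClass K] [Preorder K] [PosMulStrictMono K]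
    {S : Set ι} {c : K} (hc : 0 < c) {x : ι → K} (hx : x ∈ positiveOn S) :
    c • x ∈ positiveOn S :=
  ⟨fun i hi => mul_pos hc (hx.1 i hi), fun i hi => by
    simp only [Pi.smul_apply, smul_eq_mul, hx.2 i hi, mul_zero]⟩

end PositiveOn

theorem inter_neg_eq_singleton_zero_of_nonneg {G : Type*} [AddCommGroup G] [PartialOrder G]
    [IsOrderedAddMonoid G] {C : Set G} (hC : ∀ x ∈ C, 0 ≤ x) (h0 : 0 ∈ C) :
    C ∩ -C = {0} := by
  ext x
  constructor
  · rintro ⟨hx, hnx⟩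
    exact le_antisymm (neg_nonneg.mp (hC _ hnx)) (hC x hx)
  · rintro rfl
    exact ⟨h0, by rwa [Set.mem_neg, neg_zero]⟩

theorem stmt8_general (F : Subfield ℝ) (n : ℕ) (𝒮 : Set (Set (Fin n)))
    (hcup : ∀ S₁ ∈ 𝒮, ∀ S₂ ∈ 𝒮, S₁ ∪ S₂ ∈ 𝒮)
    (U : Set (Fin n → F))
    (hU : U = {x | ∃ S ∈ 𝒮, (∀ i ∈ S, 0 < x i) ∧ ∀ i ∉ S, x i = 0}) :
    (∀ x ∈ U, ∀ y ∈ U, x + y ∈ U) ∧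
    (∀ c : F, 0 < c → ∀ x ∈ U, (c • x : Fin n → F) ∈ U) ∧
    (U ∪ {0}) ∩ (-(U ∪ {0})) = {0} := by
  subst hU
  refine ⟨?_, ?_, ?_⟩
  · rintro x ⟨S₁, hS₁, hx⟩ y ⟨S₂, hS₂, hy⟩
    exact ⟨S₁ ∪ S₂, hcup _ hS₁ _ hS₂, add_mem_positiveOn_union hx hy⟩
  · rintro c hc x ⟨S, hS, hx⟩
    exact ⟨S, hS, smul_mem_positiveOn hc hx⟩
  · refine inter_neg_eq_singleton_zero_of_nonneg ?_ (Or.inr rfl)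
    rintro x (⟨S, -, hx⟩ | rfl)
    · exact nonneg_of_mem_positiveOn hx
    · exact le_rfl

/-- Let `𝒮` be a sublattice of the power set of `Fin n` containing `∅` and `univ`, and
`U⁺ = ⋃_{S ∈ 𝒮} {x : x_i > 0 for i ∈ S, x_i = 0 for i ∉ S}`. Then `(Fⁿ, U⁺ ∪ {0})` is an
ordered vector space: `U⁺` is closed under addition and positive scalar multiplication,
and `(U⁺ ∪ {0}) ∩ (-(U⁺ ∪ {0})) = {0}`. -/
theorem stmt8 (F : Subfield ℝ) (n : ℕ) (𝒮 : Set (Set (Fin n)))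
    (hempty : ∅ ∈ 𝒮) (huniv : Set.univ ∈ 𝒮)
    (hcup : ∀ S₁ ∈ 𝒮, ∀ S₂ ∈ 𝒮, S₁ ∪ S₂ ∈ 𝒮)
    (hcap : ∀ S₁ ∈ 𝒮, ∀ S₂ ∈ 𝒮, S₁ ∩ S₂ ∈ 𝒮)
    (U : Set (Fin n → F))
    (hU : U = {x | ∃ S ∈ 𝒮, (∀ i ∈ S, 0 < x i) ∧ ∀ i ∉ S, x i = 0}) :
    (∀ x ∈ U, ∀ y ∈ U, x + y ∈ U) ∧
    (∀ c : F, 0 < c → ∀ x ∈ U, (c • x : Fin n → F) ∈ U) ∧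
    (U ∪ {0}) ∩ (-(U ∪ {0})) = {0} :=
  stmt8_general F n 𝒮 hcup U hU
end

section
/- With S a sublattice of 2^{Fin n} containing ∅ and Fin n, Z_i := ⋃{S ∈ S : i ∉ S}, and α^ε defined by α^ε_i(z) = z_i + ε∑_{j ∉ Z_i} z_j for ε > 0, one has α^ε(F_{≥0}ⁿ) ⊆ U⁺, where U⁺ = ⋃_{S ∈ S} F_{>0}^S·0^{S^c} (vectors strictly positive on S, zero off S). -/
/-!
Write `Z_i` for the largest member of `𝒮` avoiding `i` and `S_A` for the least member containing
`A`. For `z ≥ 0`, the coordinate `α^ε_i(z)` vanishes exactly when the support of `z` lies in `Z_i`,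
and is positive otherwise. Since `i ∈ S_A ↔ A ⊄ Z_i`, the vector `α^ε(z)` is positive on
`S_{supp z}` and zero off it.
-/

open Classical

/-- The map `α^ε` associated to a sublattice `𝒮` of `2^{Fin n}`:
`α^ε_i(z) = z_i + ε ∑_{j ∉ Z_i} z_j` where `Z_i = ⋃ {S ∈ 𝒮 : i ∉ S}`. -/
noncomputable def alphaMap (F : Subfield ℝ) (n : ℕ) (𝒮 : Set (Set (Fin n))) (ε : F)
    (z : Fin n → F) : Fin n → F :=
  fun i => z i + ε * ∑ j ∈ Finset.univ.filter (fun j => j ∉ ⋃₀ {S ∈ 𝒮 | i ∉ S}), z j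

open Set

namespace Set

variable {ι : Type*} {𝒮 : Set (Set ι)} {A S : Set ι} {i : ι}

def leastSupersetIn (𝒮 : Set (Set ι)) (A : Set ι) : Set ι :=
  ⋂₀ {S ∈ 𝒮 | A ⊆ S}

def greatestAvoidingIn (𝒮 : Set (Set ι)) (i : ι) : Set ι :=
  ⋃₀ {S ∈ 𝒮 | i ∉ S}

theorem leastSupersetIn_mem [Finite ι] (hcap : InfClosed 𝒮) (huniv : univ ∈ 𝒮) (A : Set ι) :
    leastSupersetIn 𝒮 A ∈ 𝒮 :=
  hcap.sInf_mem (toFinite _) huniv fun _ hS => hS.1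

theorem subset_leastSupersetIn : A ⊆ leastSupersetIn 𝒮 A :=
  subset_sInter fun _ hS => hS.2

theorem leastSupersetIn_subset (hS : S ∈ 𝒮) (hA : A ⊆ S) : leastSupersetIn 𝒮 A ⊆ S :=
  sInter_subset_of_mem ⟨hS, hA⟩

theorem greatestAvoidingIn_mem [Finite ι] (hcup : SupClosed 𝒮) (hempty : ∅ ∈ 𝒮) (i : ι) :
    greatestAvoidingIn 𝒮 i ∈ 𝒮 :=
  hcup.sSup_mem (toFinite _) hempty fun _ hS => hS.1

theorem notMem_greatestAvoidingIn : i ∉ greatestAvoidingIn 𝒮 i :=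
  fun ⟨_, hS, hiS⟩ => hS.2 hiS

theorem subset_greatestAvoidingIn (hS : S ∈ 𝒮) (hi : i ∉ S) : S ⊆ greatestAvoidingIn 𝒮 i :=
  subset_sUnion_of_mem ⟨hS, hi⟩

theorem mem_leastSupersetIn_iff [Finite ι] (hcup : SupClosed 𝒮) (hcap : InfClosed 𝒮)
    (hempty : ∅ ∈ 𝒮) (huniv : univ ∈ 𝒮) :
    i ∈ leastSupersetIn 𝒮 A ↔ ¬ A ⊆ greatestAvoidingIn 𝒮 i := by
  constructor
  · intro hi hA
    exact notMem_greatestAvoidingIn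
      (leastSupersetIn_subset (greatestAvoidingIn_mem hcup hempty i) hA hi)
  · intro hA
    by_contra hi
    exact hA (subset_leastSupersetIn.trans
      (subset_greatestAvoidingIn (leastSupersetIn_mem hcap huniv A) hi))

end Set

section alphaMap

variable {F : Subfield ℝ} {n : ℕ} {𝒮 : Set (Set (Fin n))} {ε : F} {z : Fin n → F}

theorem alphaMap_apply (i : Fin n) :
    alphaMap F n 𝒮 ε z i =
      z i + ε * ∑ j ∈ Finset.univ.filter (· ∉ greatestAvoidingIn 𝒮 i), z j :=
  rfl

theorem alphaMap_nonneg (hε : 0 ≤ ε) (hz : ∀ j, 0 ≤ z j) (i : Fin n) :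
    0 ≤ alphaMap F n 𝒮 ε z i :=
  add_nonneg (hz i) (mul_nonneg hε (Finset.sum_nonneg fun j _ => hz j))

theorem alphaMap_eq_zero_iff (hε : 0 < ε) (hz : ∀ j, 0 ≤ z j) (i : Fin n) :
    alphaMap F n 𝒮 ε z i = 0 ↔ Function.support z ⊆ greatestAvoidingIn 𝒮 i := by
  rw [alphaMap_apply, add_eq_zero_iff_of_nonneg (hz i)
      (mul_nonneg hε.le (Finset.sum_nonneg fun j _ => hz j)),
    mul_eq_zero, or_iff_right hε.ne', Finset.sum_eq_zero_iff_of_nonneg fun j _ => hz j,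
    Function.support_subset_iff']
  simp only [Finset.mem_filter, Finset.mem_univ, true_and]
  exact and_iff_right_of_imp fun h => h i notMem_greatestAvoidingIn

end alphaMap

/-- With `𝒮` a sublattice of `2^{Fin n}` containing `∅` and `Fin n`, and `α^ε` as above,
`α^ε(F_{≥0}ⁿ) ⊆ U⁺`, where `U⁺ = ⋃_{S ∈ 𝒮} F_{>0}^S · 0^{Sᶜ}`. -/
theorem stmt9 (F : Subfield ℝ) (n : ℕ) (𝒮 : Set (Set (Fin n)))
    (hempty : ∅ ∈ 𝒮) (huniv : Set.univ ∈ 𝒮)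
    (hcup : ∀ S₁ ∈ 𝒮, ∀ S₂ ∈ 𝒮, S₁ ∪ S₂ ∈ 𝒮)
    (hcap : ∀ S₁ ∈ 𝒮, ∀ S₂ ∈ 𝒮, S₁ ∩ S₂ ∈ 𝒮)
    (ε : F) (hε : 0 < ε) :
    ∀ z : Fin n → F, (∀ i, 0 ≤ z i) →
      alphaMap F n 𝒮 ε z ∈ {x : Fin n → F | ∃ S ∈ 𝒮, (∀ i ∈ S, 0 < x i) ∧ ∀ i ∉ S, x i = 0} := by
  intro z hz
  refine ⟨leastSupersetIn 𝒮 (Function.support z), leastSupersetIn_mem hcap huniv _, ?_, ?_⟩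
  · intro i hi
    rw [mem_leastSupersetIn_iff hcup hcap hempty huniv, ← alphaMap_eq_zero_iff hε hz] at hi
    exact (alphaMap_nonneg hε.le hz i).lt_of_ne' hi
  · intro i hi
    rw [mem_leastSupersetIn_iff hcup hcap hempty huniv, not_not] at hi
    exact (alphaMap_eq_zero_iff hε hz i).mpr hi
end
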